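/- arXiv:2310.20346 — 9 statements merged into one kernel-verified Lean document; each statement's English description precedes it below -/
import Mathlib

section
/- Let H be a Hilbert space densely embedded in a Banach space X with embedding norm at most 1, and let φ be a nonzero vector of H that lies in X* with ‖φ‖_X · ‖φ‖_{X*} = ‖φ‖_H². Then for every f ∈ H with ⟪f, φ⟫ = 0 one has ‖φ + f‖_X ≥ ‖φ‖_X. -/
theorem ContinuousLinearMap.norm_le_of_norm_mul_opNorm_le_norm_apply
    {𝕜 E : Type*} [NontriviallyNormedField 𝕜] [NormedAddCommGroup E] [NormedSpace 𝕜 E]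
    {Φ : E →L[𝕜] 𝕜} (hΦ : Φ ≠ 0) {x y : E} (h : ‖x‖ * ‖Φ‖ ≤ ‖Φ y‖) : ‖x‖ ≤ ‖y‖ := by
  refine le_of_mul_le_mul_right ?_ (norm_pos_iff.mpr hΦ)
  calc ‖x‖ * ‖Φ‖ ≤ ‖Φ y‖ := h
    _ ≤ ‖Φ‖ * ‖y‖ := Φ.le_opNorm y
    _ = ‖y‖ * ‖Φ‖ := mul_comm _ _

theorem hilbert_point_of_dual_norm_product_general
    {H X : Type*} [NormedAddCommGroup H] [InnerProductSpace ℂ H]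
    [NormedAddCommGroup X] [NormedSpace ℂ X]
    (i : H →ₗ[ℂ] X)
    (φ : H) (hφ : φ ≠ 0)
    (Φ : X →L[ℂ] ℂ) (hΦ : ∀ f : H, Φ (i f) = @inner ℂ H _ φ f)
    (hnorm : ‖i φ‖ * ‖Φ‖ = ‖φ‖ ^ 2) :
    ∀ f : H, @inner ℂ H _ f φ = 0 → ‖i φ‖ ≤ ‖i (φ + f)‖ := by
  intro f hf
  have hΦ_ne : Φ ≠ 0 := fun h0 ↦ hφ <| inner_self_eq_zero.mp <| by
    rw [← hΦ, h0]; rfl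
  have hΦ_apply : Φ (i (φ + f)) = (‖φ‖ : ℂ) ^ 2 := by
    rw [hΦ, inner_add_right, inner_eq_zero_symm.mp hf, add_zero, inner_self_eq_norm_sq_to_K]
    norm_cast
  refine Φ.norm_le_of_norm_mul_opNorm_le_norm_apply hΦ_ne ?_
  rw [hnorm, hΦ_apply]
  simp

/-- If φ ∈ H is nonzero, lies in X* and `‖φ‖_X ⬝ ‖φ‖_{X*} = ‖φ‖_H²`, then
`‖φ + f‖_X ≥ ‖φ‖_X` for every f ⊥ φ; i.e., φ is a Hilbert point in X. -/
theorem hilbert_point_of_dual_norm_product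
    {H X : Type*} [NormedAddCommGroup H] [InnerProductSpace ℂ H] [CompleteSpace H]
    [NormedAddCommGroup X] [NormedSpace ℂ X] [CompleteSpace X]
    (i : H →ₗ[ℂ] X) (hinj : Function.Injective i) (hdense : DenseRange i)
    (hcontr : ∀ f : H, ‖i f‖ ≤ ‖f‖)
    (φ : H) (hφ : φ ≠ 0)
    (Φ : X →L[ℂ] ℂ) (hΦ : ∀ f : H, Φ (i f) = @inner ℂ H _ φ f)
    (hnorm : ‖i φ‖ * ‖Φ‖ = ‖φ‖ ^ 2) :
    ∀ f : H, @inner ℂ H _ f φ = 0 → ‖i φ‖ ≤ ‖i (φ + f)‖ :=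
  hilbert_point_of_dual_norm_product_general i φ hφ Φ hΦ hnorm
end

section
/- Let H be a Hilbert space densely embedded in a Banach space X with embedding norm at most 1, and suppose the nonzero vector φ ∈ H satisfies ‖φ + f‖_X ≥ ‖φ‖_X for every f ∈ H with ⟪f, φ⟫ = 0. Then φ lies in X* and ‖φ‖_X · ‖φ‖_{X*} = ‖φ‖_H². -/
/-!
Write `f = c • (φ + g)` with `c = ⟪φ, f⟫ / ‖φ‖²` and `g ⟂ φ`. Since `φ` is a Hilbert point,
`‖c‖ ‖φ‖_X ≤ ‖f‖_X`, i.e. `|⟪φ, f⟫| ≤ (‖φ‖² / ‖φ‖_X) ‖f‖_X`. So `f ↦ ⟪φ, f⟫` extends by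
Hahn–Banach to a functional on `X` of norm at most `‖φ‖² / ‖φ‖_X`, and evaluating it at `φ`
gives the reverse inequality.
-/

open scoped InnerProductSpace

section

variable {𝕜 E X : Type*} [RCLike 𝕜] [NormedAddCommGroup E] [InnerProductSpace 𝕜 E]
  [NormedAddCommGroup X] [NormedSpace 𝕜 X]

def IsHilbertPoint (i : E →ₗ[𝕜] X) (φ : E) : Prop :=
  ∀ f : E, ⟪f, φ⟫_𝕜 = 0 → ‖i φ‖ ≤ ‖i (φ + f)‖

theorem IsHilbertPoint.norm_mul_norm_inner_le {i : E →ₗ[𝕜] X} {φ : E}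
    (hφ : IsHilbertPoint i φ) (f : E) :
    ‖i φ‖ * ‖⟪φ, f⟫_𝕜‖ ≤ ‖φ‖ ^ 2 * ‖i f‖ := by
  by_cases hf : ⟪φ, f⟫_𝕜 = 0
  · rw [hf, norm_zero, mul_zero]
    positivity
  have hφ0 : (‖φ‖ : 𝕜) ^ 2 ≠ 0 := by
    have : φ ≠ 0 := by rintro rfl; simp at hf
    simpa using this
  set c : 𝕜 := ⟪φ, f⟫_𝕜 / (‖φ‖ : 𝕜) ^ 2 with hc_def
  have hc : c ≠ 0 := div_ne_zero hf hφ0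
  have horth : ⟪c⁻¹ • f - φ, φ⟫_𝕜 = 0 := by
    refine inner_eq_zero_symm.mp ?_
    rw [inner_sub_right, inner_smul_right, inner_self_eq_norm_sq_to_K, hc_def]
    field_simp
    ring
  have hmin : ‖c‖ * ‖i φ‖ ≤ ‖i f‖ := by
    have := hφ _ horth
    rw [add_sub_cancel, map_smul, norm_smul, norm_inv, ← div_eq_inv_mul,
      le_div_iff₀ (norm_pos_iff.mpr hc)] at this
    linarith
  have hnorm : ‖⟪φ, f⟫_𝕜‖ = ‖c‖ * ‖φ‖ ^ 2 := by
    rw [hc_def, norm_div, norm_pow, RCLike.norm_ofReal, abs_norm, div_mul_cancel₀]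
    simpa using hφ0
  calc ‖i φ‖ * ‖⟪φ, f⟫_𝕜‖ = ‖φ‖ ^ 2 * (‖c‖ * ‖i φ‖) := by rw [hnorm]; ring
    _ ≤ ‖φ‖ ^ 2 * ‖i f‖ := by gcongr

theorem LinearMap.exists_extension_of_norm_le_mul_norm {i : E →ₗ[𝕜] X}
    (hinj : Function.Injective i) (ℓ : E →ₗ[𝕜] 𝕜) {M : ℝ} (hM : 0 ≤ M)
    (hℓ : ∀ f, ‖ℓ f‖ ≤ M * ‖i f‖) :
    ∃ Φ : X →L[𝕜] 𝕜, (∀ f, Φ (i f) = ℓ f) ∧ ‖Φ‖ ≤ M := by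
  let e := LinearEquiv.ofInjective i hinj
  have he : ∀ f, (e f : X) = i f := fun _ => rfl
  have hψ : ∀ x, ‖(ℓ ∘ₗ e.symm.toLinearMap) x‖ ≤ M * ‖x‖ := fun x => by
    have := hℓ (e.symm x)
    rw [← he, e.apply_symm_apply] at this
    exact this
  obtain ⟨Φ, hΦ, hΦnorm⟩ :=
    exists_extension_norm_eq _ ((ℓ ∘ₗ e.symm.toLinearMap).mkContinuous M hψ)
  refine ⟨Φ, fun f => ?_, hΦnorm ▸ LinearMap.mkContinuous_norm_le _ hM hψ⟩
  simpa [he] using hΦ (e f)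

end

theorem dual_norm_product_of_hilbert_point_general
    {H X : Type*} [NormedAddCommGroup H] [InnerProductSpace ℂ H]
    [NormedAddCommGroup X] [NormedSpace ℂ X]
    (i : H →ₗ[ℂ] X) (hinj : Function.Injective i)
    (φ : H) (hφ : φ ≠ 0)
    (hpoint : ∀ f : H, @inner ℂ H _ f φ = 0 → ‖i φ‖ ≤ ‖i (φ + f)‖) :
    ∃ Φ : X →L[ℂ] ℂ, (∀ f : H, Φ (i f) = @inner ℂ H _ φ f) ∧ ‖i φ‖ * ‖Φ‖ = ‖φ‖ ^ 2 := by
  have hiφ : 0 < ‖i φ‖ := norm_pos_iff.mpr ((map_ne_zero_iff i hinj).mpr hφ)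
  obtain ⟨Φ, hΦ, hΦnorm⟩ := LinearMap.exists_extension_of_norm_le_mul_norm hinj
    (innerₛₗ ℂ φ) (M := ‖φ‖ ^ 2 / ‖i φ‖) (by positivity) fun f => by
      rw [div_mul_eq_mul_div, le_div_iff₀ hiφ, mul_comm]
      exact IsHilbertPoint.norm_mul_norm_inner_le hpoint f
  refine ⟨Φ, hΦ, le_antisymm ?_ ?_⟩
  · calc ‖i φ‖ * ‖Φ‖ ≤ ‖i φ‖ * (‖φ‖ ^ 2 / ‖i φ‖) := by gcongr
      _ = ‖φ‖ ^ 2 := mul_div_cancel₀ _ hiφ.ne'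
  · calc ‖φ‖ ^ 2 = ‖Φ (i φ)‖ := by simp [hΦ]
      _ ≤ ‖Φ‖ * ‖i φ‖ := Φ.le_opNorm _
      _ = ‖i φ‖ * ‖Φ‖ := mul_comm _ _

/-- If the nonzero vector φ ∈ H is a Hilbert point in X, then φ lies in X*
and `‖φ‖_X ⬝ ‖φ‖_{X*} = ‖φ‖_H²`. -/
theorem dual_norm_product_of_hilbert_point
    {H X : Type*} [NormedAddCommGroup H] [InnerProductSpace ℂ H] [CompleteSpace H]
    [NormedAddCommGroup X] [NormedSpace ℂ X] [CompleteSpace X]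
    (i : H →ₗ[ℂ] X) (hinj : Function.Injective i) (hdense : DenseRange i)
    (hcontr : ∀ f : H, ‖i f‖ ≤ ‖f‖)
    (φ : H) (hφ : φ ≠ 0)
    (hpoint : ∀ f : H, @inner ℂ H _ f φ = 0 → ‖i φ‖ ≤ ‖i (φ + f)‖) :
    ∃ Φ : X →L[ℂ] ℂ, (∀ f : H, Φ (i f) = @inner ℂ H _ φ f) ∧ ‖i φ‖ * ‖Φ‖ = ‖φ‖ ^ 2 :=
  dual_norm_product_of_hilbert_point_general i hinj φ hφ hpoint
end

section
/- Let H be a Hilbert space densely embedded in a Banach space X with embedding norm at most 1. If φ ∈ H is nonzero with ‖φ‖_X = ‖φ‖_H, then ‖φ + f‖_X ≥ ‖φ‖_X for every f ∈ H with ⟪f, φ⟫ = 0 (i.e., norm attaining vectors are Hilbert points). -/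
/-!
Compose a Hahn–Banach norming functional of `i φ` with the contraction `i`: the result is a
functional on `H` of norm at most one that attains its norm at `φ`. By Riesz it is the inner
product with some `g` in the closed unit ball satisfying `⟪g, φ⟫ = ‖φ‖`, and the equality case of
Cauchy–Schwarz forces `g = φ / ‖φ‖`. Hence the functional vanishes on `φ^⊥`, and evaluating it at
`φ + f` gives `‖φ‖ ≤ ‖i (φ + f)‖`.
-/

open InnerProductSpace

section

variable {𝕜 H : Type*} [RCLike 𝕜] [NormedAddCommGroup H] [InnerProductSpace 𝕜 H]

theorem eq_smul_of_norm_le_one_of_inner_eq_norm {g φ : H} (hg : ‖g‖ ≤ 1) (hφ : φ ≠ 0)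
    (hgφ : ⟪g, φ⟫_𝕜 = ‖φ‖) : g = (‖φ‖⁻¹ : 𝕜) • φ := by
  have hφpos : 0 < ‖φ‖ := norm_pos_iff.mpr hφ
  have hg_one : ‖g‖ = 1 := by
    have hcs : ‖φ‖ ≤ ‖g‖ * ‖φ‖ := by
      simpa [hgφ] using norm_inner_le_norm (𝕜 := 𝕜) g φ
    exact le_antisymm hg (le_of_mul_le_mul_right (by simpa using hcs) hφpos)
  have hcollinear : (‖φ‖ : 𝕜) • g = (‖g‖ : 𝕜) • φ :=
    inner_eq_norm_mul_iff.mp (by rw [hgφ, hg_one]; simp)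
  rw [hg_one, RCLike.ofReal_one, one_smul] at hcollinear
  exact (eq_inv_smul_iff₀ (by exact_mod_cast hφpos.ne')).mpr hcollinear

theorem StrongDual.apply_eq_zero_of_norm_le_one_of_apply_eq_norm [CompleteSpace H]
    {ψ : StrongDual 𝕜 H} {φ f : H} (hψ : ‖ψ‖ ≤ 1) (hφ : φ ≠ 0) (hψφ : ψ φ = ‖φ‖)
    (hf : ⟪f, φ⟫_𝕜 = 0) : ψ f = 0 := by
  have hg : (toDual 𝕜 H).symm ψ = (‖φ‖⁻¹ : 𝕜) • φ :=
    eq_smul_of_norm_le_one_of_inner_eq_norm (by simpa using hψ) hφ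
      (by rw [toDual_symm_apply, hψφ])
  rw [← toDual_symm_apply, hg, inner_smul_left, inner_eq_zero_symm.mp hf, mul_zero]

end

theorem hilbert_point_of_norm_attaining_general
    {H X : Type*} [NormedAddCommGroup H] [InnerProductSpace ℂ H] [CompleteSpace H]
    [NormedAddCommGroup X] [NormedSpace ℂ X]
    (i : H →ₗ[ℂ] X)
    (hcontr : ∀ f : H, ‖i f‖ ≤ ‖f‖)
    (φ : H) (hφ : φ ≠ 0)
    (hattain : ‖i φ‖ = ‖φ‖) :
    ∀ f : H, @inner ℂ H _ f φ = 0 → ‖i φ‖ ≤ ‖i (φ + f)‖ := by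
  intro f hf
  obtain ⟨x, hx, hxφ⟩ := exists_dual_vector'' ℂ (i φ)
  let ψ : StrongDual ℂ H := (x.toLinearMap.comp i).mkContinuous 1 fun v =>
    (x.le_opNorm (i v)).trans (mul_le_mul hx (hcontr v) (norm_nonneg _) zero_le_one)
  have hψ : ‖ψ‖ ≤ 1 := LinearMap.mkContinuous_norm_le _ zero_le_one _
  have hψφ : ψ φ = ‖φ‖ := by rw [← hattain]; exact hxφ
  have hψf : ψ f = 0 := StrongDual.apply_eq_zero_of_norm_le_one_of_apply_eq_norm hψ hφ hψφ hf
  calc ‖i φ‖ = ‖ψ (φ + f)‖ := by rw [map_add, hψf, add_zero, hψφ, hattain]; simp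
    _ = ‖x (i (φ + f))‖ := rfl
    _ ≤ ‖x‖ * ‖i (φ + f)‖ := x.le_opNorm _
    _ ≤ ‖i (φ + f)‖ := mul_le_of_le_one_left (norm_nonneg _) hx

/-- Norm attaining vectors are Hilbert points: if `‖φ‖_X = ‖φ‖_H` for a
nonzero φ ∈ H, then `‖φ + f‖_X ≥ ‖φ‖_X` for all f ∈ H with ⟪f, φ⟫ = 0. -/
theorem hilbert_point_of_norm_attaining
    {H X : Type*} [NormedAddCommGroup H] [InnerProductSpace ℂ H] [CompleteSpace H]
    [NormedAddCommGroup X] [NormedSpace ℂ X] [CompleteSpace X]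
    (i : H →ₗ[ℂ] X) (hinj : Function.Injective i) (hdense : DenseRange i)
    (hcontr : ∀ f : H, ‖i f‖ ≤ ‖f‖)
    (φ : H) (hφ : φ ≠ 0)
    (hattain : ‖i φ‖ = ‖φ‖) :
    ∀ f : H, @inner ℂ H _ f φ = 0 → ‖i φ‖ ≤ ‖i (φ + f)‖ :=
  hilbert_point_of_norm_attaining_general i hcontr φ hφ hattain
end

section
/- The equation (α/2)·√(4 − α²) = arcsin(α/2) on the interval [0, 2] has exactly two solutions: α = 0 and a unique α₀ ∈ (0, 2), and this α₀ satisfies 1.62 < α₀ < 1.63. -/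
/-!
Put `g α = α/2 · √(4 - α²) - arcsin (α/2)`, so the solutions are the zeros of `g`. Its derivative
is `(1 - α²) / √(4 - α²)`, so `g` increases strictly on `[0, 1]` and decreases strictly on `[1, 2]`.
Since `g 0 = 0`, the only zero in `[0, 1]` is `0`, and `[1, 2]` holds at most one zero. There is
one in `(1.62, 1.63)` by the intermediate value theorem: `0.81 · √(4 - 1.62²) > 0.95` and
`0.815 · √(4 - 1.63²) < 0.95`, while `arcsin 0.81 < 0.95 < arcsin 0.815` by Taylor bounds on `sin`.
-/

open Real Set

theorem StrictMonoOn.eq_or_eq_of_strictAntiOn {f : ℝ → ℝ} {a b c x y : ℝ}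
    (hinc : StrictMonoOn f (Icc a b)) (hdec : StrictAntiOn f (Icc b c))
    (hab : a ≤ b) (hy : y ∈ Icc b c) (hfy : f y = f a) (hx : x ∈ Icc a c) (hfx : f x = f a) :
    x = a ∨ x = y := by
  rcases le_total x b with hxb | hbx
  · exact .inl (hinc.injOn ⟨hx.1, hxb⟩ ⟨le_rfl, hab⟩ hfx)
  · exact .inr (hdec.injOn ⟨hbx, hx.2⟩ hy (hfx.trans hfy.symm))

noncomputable def arcsinGap (α : ℝ) : ℝ := α / 2 * √(4 - α ^ 2) - arcsin (α / 2)

lemma arcsinGap_zero : arcsinGap 0 = 0 := by simp [arcsinGap]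

lemma eq_arcsin_iff_arcsinGap_eq (α : ℝ) :
    α / 2 * √(4 - α ^ 2) = arcsin (α / 2) ↔ arcsinGap α = arcsinGap 0 := by
  rw [arcsinGap_zero, arcsinGap, sub_eq_zero]

lemma continuous_arcsinGap : Continuous arcsinGap := by
  unfold arcsinGap; fun_prop

lemma sqrt_one_sub_half_sq (α : ℝ) : √(1 - (α / 2) ^ 2) = √(4 - α ^ 2) / 2 := by
  rw [show 1 - (α / 2) ^ 2 = (4 - α ^ 2) / 2 ^ 2 by ring, sqrt_div' _ (by norm_num),
    sqrt_sq zero_le_two]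

lemma hasDerivAt_arcsinGap {α : ℝ} (h : α ^ 2 < 4) :
    HasDerivAt arcsinGap ((1 - α ^ 2) / √(4 - α ^ 2)) α := by
  have hpos : 0 < √(4 - α ^ 2) := sqrt_pos.2 (by linarith)
  have hsq : √(4 - α ^ 2) ^ 2 = 4 - α ^ 2 := sq_sqrt (by linarith)
  have hhalf : HasDerivAt (fun x : ℝ => x / 2) (1 / 2) α := (hasDerivAt_id α).div_const 2
  have hsqrt : HasDerivAt (fun x : ℝ => √(4 - x ^ 2)) (-α / √(4 - α ^ 2)) α :=
    (((hasDerivAt_pow 2 α).const_sub 4).sqrt (by linarith)).congr_deriv (by field_simp; ring)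
  have harcsin : HasDerivAt (fun x : ℝ => arcsin (x / 2)) (1 / √(4 - α ^ 2)) α :=
    ((hasDerivAt_arcsin (by nlinarith) (by nlinarith)).comp α hhalf).congr_deriv
      (by rw [sqrt_one_sub_half_sq]; field_simp)
  refine ((hhalf.mul hsqrt).sub harcsin).congr_deriv ?_
  field_simp
  rw [hsq]; ring

lemma strictMonoOn_arcsinGap : StrictMonoOn arcsinGap (Icc 0 1) := by
  refine strictMonoOn_of_hasDerivWithinAt_pos (f' := fun x => (1 - x ^ 2) / √(4 - x ^ 2))
    (convex_Icc 0 1) continuous_arcsinGap.continuousOn (fun x hx => ?_) (fun x hx => ?_)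
  all_goals rw [interior_Icc] at hx
  · exact (hasDerivAt_arcsinGap (by nlinarith [hx.1, hx.2])).hasDerivWithinAt
  · exact div_pos (by nlinarith [hx.1, hx.2]) (sqrt_pos.2 (by nlinarith [hx.1, hx.2]))

lemma strictAntiOn_arcsinGap : StrictAntiOn arcsinGap (Icc 1 2) := by
  refine strictAntiOn_of_hasDerivWithinAt_neg (f' := fun x => (1 - x ^ 2) / √(4 - x ^ 2))
    (convex_Icc 1 2) continuous_arcsinGap.continuousOn (fun x hx => ?_) (fun x hx => ?_)
  all_goals rw [interior_Icc] at hx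
  · exact (hasDerivAt_arcsinGap (by nlinarith [hx.1, hx.2])).hasDerivWithinAt
  · exact div_neg_of_neg_of_pos (by nlinarith [hx.1]) (sqrt_pos.2 (by nlinarith [hx.1, hx.2]))

lemma two_mul_sub_cube_mul_lt_sin_two_mul {x : ℝ} (hx₀ : 0 < x) (hx : x ^ 2 < 2) :
    2 * (x - x ^ 3 / 6) * (1 - x ^ 2 / 2) < sin (2 * x) := by
  rw [sin_two_mul]
  have hs : 0 < x - x ^ 3 / 6 := by nlinarith
  have hc : 0 < 1 - x ^ 2 / 2 := by linarith
  have := mul_lt_mul'' (sin_gt_sub_cube hx₀) (one_sub_sq_div_two_lt_cos hx₀.ne') hs.le hc.le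
  linarith

lemma point_95_mem_Icc : (0.95 : ℝ) ∈ Icc (-(π / 2)) (π / 2) := by
  constructor <;> linarith [pi_gt_three]

-- The cubic Taylor bound at 0.95 is too coarse here; halving the angle makes it sharp enough.
lemma arcsin_lt_point_95 : arcsin 0.81 < 0.95 := by
  have := two_mul_sub_cube_mul_lt_sin_two_mul (x := 0.475) (by norm_num) (by norm_num)
  refine (arcsin_lt_iff_lt_sin (by norm_num) point_95_mem_Icc).2 ?_
  norm_num at this ⊢
  linarith

lemma point_95_lt_arcsin : 0.95 < arcsin 0.815 := by
  have := (abs_le.1 (sin_bound (x := 0.95) (by norm_num [abs_of_pos]))).2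
  refine (lt_arcsin_iff_sin_lt point_95_mem_Icc (by norm_num)).2 ?_
  norm_num [abs_of_pos] at this ⊢
  linarith

lemma arcsinGap_pos : 0 < arcsinGap 1.62 := by
  have hsqrt : (95 / 81 : ℝ) < √(4 - 1.62 ^ 2) := lt_sqrt_of_sq_lt (by norm_num)
  have := arcsin_lt_point_95
  rw [arcsinGap, show (1.62 : ℝ) / 2 = 0.81 by norm_num]; linarith

lemma arcsinGap_neg : arcsinGap 1.63 < 0 := by
  have hsqrt : √(4 - 1.63 ^ 2) < 1.16 := (sqrt_lt' (by norm_num)).2 (by norm_num)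
  have := point_95_lt_arcsin
  rw [arcsinGap, show (1.63 : ℝ) / 2 = 0.815 by norm_num]; linarith

/-- The equation `(α/2)·√(4 − α²) = arcsin(α/2)` on `[0, 2]` has exactly the
solutions `α = 0` and a unique `α₀ ∈ (0, 2)`, with `1.62 < α₀ < 1.63`. -/
theorem unique_positive_solution :
    ∃ α₀ : ℝ, α₀ ∈ Set.Ioo (0 : ℝ) 2 ∧
      (α₀ / 2) * Real.sqrt (4 - α₀ ^ 2) = Real.arcsin (α₀ / 2) ∧
      1.62 < α₀ ∧ α₀ < 1.63 ∧
      ∀ α ∈ Set.Icc (0 : ℝ) 2,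
        ((α / 2) * Real.sqrt (4 - α ^ 2) = Real.arcsin (α / 2) ↔ α = 0 ∨ α = α₀) := by
  obtain ⟨α₀, ⟨hlo, hhi⟩, hα₀⟩ := intermediate_value_Ioo' (by norm_num : (1.62 : ℝ) ≤ 1.63)
    continuous_arcsinGap.continuousOn ⟨arcsinGap_neg, arcsinGap_pos⟩
  have hroot : arcsinGap α₀ = arcsinGap 0 := hα₀.trans arcsinGap_zero.symm
  refine ⟨α₀, ⟨by linarith, by linarith⟩, (eq_arcsin_iff_arcsinGap_eq α₀).2 hroot, hlo, hhi,
    fun α hα => ?_⟩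
  rw [eq_arcsin_iff_arcsinGap_eq]
  refine ⟨strictMonoOn_arcsinGap.eq_or_eq_of_strictAntiOn strictAntiOn_arcsinGap zero_le_one
    ⟨by linarith, by linarith⟩ hroot hα, ?_⟩
  rintro (rfl | rfl)
  exacts [rfl, hroot]
end

section
/- For α ≥ 0, the integral (1/(2π)) ∫₀^{2π} |α + 2 cos θ| dθ equals (2/π)·(α·arcsin(α/2) + √(4 − α²)) when 0 ≤ α ≤ 2, and equals α when α > 2. -/
/-!
Since `θ ↦ 2π - θ` preserves `cos`, the integral over `[0, 2π]` is twice the one over `[0, π]`,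
where `cos` decreases. For `|α| ≤ 2` the integrand `α + 2 cos θ` changes sign exactly once there,
at `t = arccos (-α/2) = π/2 + arcsin (α/2)`, and `sin t = √(4 - α²)/2`; integrating the
antiderivative `αθ + 2 sin θ` on both sides of `t` gives the first formula. For `α > 2` the
integrand is positive and the integral is `2πα`.
-/

open Real intervalIntegral Set

lemma integral_const_add_two_mul_cos (α a b : ℝ) :
    ∫ θ in a..b, (α + 2 * cos θ) = α * (b - a) + 2 * (sin b - sin a) := by
  rw [integral_add intervalIntegrable_const (intervalIntegrable_cos.const_mul 2),
    integral_const, integral_const_mul, integral_cos, smul_eq_mul]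
  ring

lemma integral_abs_eq_sub_of_sign_change {f : ℝ → ℝ} {a b c : ℝ} (hac : a ≤ c) (hcb : c ≤ b)
    (hf : IntervalIntegrable f MeasureTheory.volume a b)
    (hpos : ∀ x ∈ Icc a c, 0 ≤ f x) (hneg : ∀ x ∈ Icc c b, f x ≤ 0) :
    ∫ x in a..b, |f x| = (∫ x in a..c, f x) - ∫ x in c..b, f x := by
  have hc : c ∈ uIcc a b := by rw [uIcc_of_le (hac.trans hcb)]; exact ⟨hac, hcb⟩
  have hf_ac := hf.mono_set (uIcc_subset_uIcc_left hc)
  have hf_cb := hf.mono_set (uIcc_subset_uIcc_right hc)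
  rw [← integral_add_adjacent_intervals hf_ac.abs hf_cb.abs, sub_eq_add_neg, ← integral_neg]
  congr 1
  · exact integral_congr fun x hx => abs_of_nonneg (hpos x (by rwa [uIcc_of_le hac] at hx))
  · exact integral_congr fun x hx => abs_of_nonpos (hneg x (by rwa [uIcc_of_le hcb] at hx))

lemma integral_comp_cos_zero_two_pi {g : ℝ → ℝ} (hg : Continuous g) :
    ∫ θ in (0)..(2 * π), g (cos θ) = 2 * ∫ θ in (0)..π, g (cos θ) := by
  have hint (a b : ℝ) : IntervalIntegrable (fun θ => g (cos θ)) MeasureTheory.volume a b :=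
    (hg.comp continuous_cos).intervalIntegrable a b
  have hreflect : ∫ θ in π..(2 * π), g (cos θ) = ∫ θ in (0)..π, g (cos θ) := by
    have := integral_comp_sub_left (fun θ => g (cos θ)) (2 * π) (a := 0) (b := π)
    simp only [cos_two_pi_sub] at this
    rw [this]
    congr 1 <;> ring
  rw [← integral_add_adjacent_intervals (hint 0 π) (hint π (2 * π)), hreflect, two_mul]

lemma integral_abs_const_add_two_mul_cos_zero_pi {α : ℝ} (h₁ : -2 ≤ α) (h₂ : α ≤ 2) :
    ∫ θ in (0)..π, |α + 2 * cos θ| = 2 * (α * arcsin (α / 2) + √(4 - α ^ 2)) := by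
  have hcos : cos (arccos (-(α / 2))) = -(α / 2) := cos_arccos (by linarith) (by linarith)
  have hsin : sin (arccos (-(α / 2))) = √(4 - α ^ 2) / 2 := by
    rw [sin_arccos, show 1 - (-(α / 2)) ^ 2 = (4 - α ^ 2) / 2 ^ 2 by ring,
      sqrt_div' _ (by positivity), sqrt_sq zero_le_two]
  have harccos : arccos (-(α / 2)) = π / 2 + arcsin (α / 2) := by rw [arccos_neg, arccos]; ring
  rw [integral_abs_eq_sub_of_sign_change (arccos_nonneg _) (arccos_le_pi _)
      ((by fun_prop : Continuous fun θ => α + 2 * cos θ).intervalIntegrable _ _) ?_ ?_,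
    integral_const_add_two_mul_cos, integral_const_add_two_mul_cos, sin_zero, sin_pi, hsin,
    harccos]
  · ring
  · intro θ hθ
    have := cos_le_cos_of_nonneg_of_le_pi hθ.1 (arccos_le_pi _) hθ.2
    linarith
  · intro θ hθ
    have := cos_le_cos_of_nonneg_of_le_pi (arccos_nonneg _) hθ.2 hθ.1
    linarith

/-- `(1/(2π)) ∫₀^{2π} |α + 2cos θ| dθ = (2/π)(α arcsin(α/2) + √(4 − α²))`
for `0 ≤ α ≤ 2`, and equals `α` for `α > 2`. -/
theorem integral_abs_alpha_add_two_cos (α : ℝ) (hα : 0 ≤ α) :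
    (α ≤ 2 →
      (1 / (2 * Real.pi)) * ∫ θ in (0:ℝ)..(2 * Real.pi), |α + 2 * Real.cos θ|
        = (2 / Real.pi) * (α * Real.arcsin (α / 2) + Real.sqrt (4 - α ^ 2))) ∧
    (2 < α →
      (1 / (2 * Real.pi)) * ∫ θ in (0:ℝ)..(2 * Real.pi), |α + 2 * Real.cos θ| = α) := by
  have hpi := pi_pos
  refine ⟨fun h₂ => ?_, fun h₂ => ?_⟩
  · rw [integral_comp_cos_zero_two_pi (g := fun x => |α + 2 * x|) (by fun_prop),
      integral_abs_const_add_two_mul_cos_zero_pi (by linarith) h₂]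
    field_simp
  · rw [integral_congr fun θ _ => abs_of_nonneg (by nlinarith [neg_one_le_cos θ]),
      integral_const_add_two_mul_cos, sin_two_pi, sin_zero]
    field_simp
    ring
end

section
/- For α ≥ 0, the operator norm of the real 2×2 matrix [[1, α], [α, 1]] equals 1 + α, and the operator norm (largest singular value) of the 1×3 matrix [1, α, 1] equals √(2 + α²). Consequently the 6×6 matrix with blocks [[0,0,0,1,α,1],[0,1,α,0,0,0],[0,α,1,0,0,0],[1,0,0,0,0,0],[α,0,0,0,0,0],[1,0,0,0,0,0]] has operator norm max(√(2 + α²), 1 + α). -/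
open scoped Matrix

/-!
The operator norm of `M` is the least `c ≥ 0` with `‖M x‖² ≤ c² ‖x‖²` for all `x`, so each
norm is computed by such a sum-of-squares bound together with a vector attaining it. For a row
vector `v` the bound is Cauchy–Schwarz, attained at `v`; for `[[a, b], [b, a]]` it is attained at
the eigenvector `(1, 1)`. Up to a permutation of coordinates the 6 × 6 matrix is block diagonal
with blocks `[[0, v], [vᵀ, 0]]` (of norm `‖v‖`) and `[[1, α], [α, 1]]`, so its norm is the
larger of the two.
-/

/-- Operator norm of a real matrix, with respect to the Euclidean norms. -/
noncomputable def euclideanOpNorm {m n : ℕ} (M : Matrix (Fin m) (Fin n) ℝ) : ℝ :=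
  ‖LinearMap.toContinuousLinearMap (Matrix.toEuclideanLin M)‖

section
variable {m n : ℕ} (M : Matrix (Fin m) (Fin n) ℝ)

lemma euclideanOpNorm_nonneg : 0 ≤ euclideanOpNorm M := norm_nonneg _

lemma sum_sq_mulVec_le_euclideanOpNorm_sq (x : Fin n → ℝ) :
    ∑ i, (M *ᵥ x) i ^ 2 ≤ euclideanOpNorm M ^ 2 * ∑ j, x j ^ 2 := by
  have h := pow_le_pow_left₀ (norm_nonneg _)
    ((LinearMap.toContinuousLinearMap (Matrix.toEuclideanLin M)).le_opNorm (WithLp.toLp 2 x)) 2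
  rwa [mul_pow, EuclideanSpace.real_norm_sq_eq, EuclideanSpace.real_norm_sq_eq] at h

lemma euclideanOpNorm_le_of_sum_sq_le {c : ℝ} (hc : 0 ≤ c)
    (h : ∀ x : Fin n → ℝ, ∑ i, (M *ᵥ x) i ^ 2 ≤ c ^ 2 * ∑ j, x j ^ 2) :
    euclideanOpNorm M ≤ c := by
  refine ContinuousLinearMap.opNorm_le_bound _ hc fun x => ?_
  refine (pow_le_pow_iff_left₀ (norm_nonneg _) (by positivity) two_ne_zero).mp ?_
  rw [mul_pow, EuclideanSpace.real_norm_sq_eq, EuclideanSpace.real_norm_sq_eq]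
  exact h x.ofLp

lemma le_euclideanOpNorm_of_sum_sq_le {c : ℝ} (v : Fin n → ℝ) (hv : v ≠ 0)
    (h : c ^ 2 * ∑ j, v j ^ 2 ≤ ∑ i, (M *ᵥ v) i ^ 2) :
    c ≤ euclideanOpNorm M := by
  have hpos : 0 < ∑ j, v j ^ 2 := by
    obtain ⟨j, hj⟩ := Function.ne_iff.mp hv
    exact Finset.sum_pos' (fun _ _ => sq_nonneg _)
      ⟨j, Finset.mem_univ _, pow_two_pos_of_ne_zero hj⟩
  have := (mul_le_mul_iff_left₀ hpos).mp (h.trans (sum_sq_mulVec_le_euclideanOpNorm_sq M v))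
  exact abs_le_of_sq_le_sq' this (euclideanOpNorm_nonneg M) |>.2
end

lemma euclideanOpNorm_row {n : ℕ} (v : Fin n → ℝ) :
    euclideanOpNorm (Matrix.of ![v]) = Real.sqrt (∑ j, v j ^ 2) := by
  have hsq : Real.sqrt (∑ j, v j ^ 2) ^ 2 = ∑ j, v j ^ 2 :=
    Real.sq_sqrt (Finset.sum_nonneg fun _ _ => sq_nonneg _)
  have hmulVec (x : Fin n → ℝ) :
      ∑ i, (Matrix.of ![v] *ᵥ x) i ^ 2 = (∑ j, v j * x j) ^ 2 := by
    simp [Matrix.mulVec, dotProduct]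
  refine le_antisymm (euclideanOpNorm_le_of_sum_sq_le _ (Real.sqrt_nonneg _) fun x => ?_) ?_
  · rw [hmulVec, hsq]
    exact Finset.sum_mul_sq_le_sq_mul_sq _ _ _
  · by_cases hv : v = 0
    · simp [hv, euclideanOpNorm_nonneg]
    refine le_euclideanOpNorm_of_sum_sq_le _ v hv ?_
    rw [hmulVec, hsq]
    simp only [← sq, le_refl]

lemma euclideanOpNorm_fin_two_of {a b : ℝ} (ha : 0 ≤ a) (hb : 0 ≤ b) :
    euclideanOpNorm !![a, b; b, a] = a + b := by
  refine le_antisymm (euclideanOpNorm_le_of_sum_sq_le _ (by positivity) fun x => ?_) ?_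
  · simp only [Matrix.mulVec, dotProduct, Matrix.of_apply, Matrix.cons_val',
      Matrix.cons_val_fin_one, Fin.sum_univ_two, Matrix.cons_val_zero, Matrix.cons_val_one]
    linarith [mul_nonneg (mul_nonneg ha hb) (sq_nonneg (x 0 - x 1))]
  · refine le_euclideanOpNorm_of_sum_sq_le _ ![1, 1] (by simp) ?_
    simp only [Fin.sum_univ_two, Matrix.cons_val_zero, one_pow, Matrix.cons_val_one,
      Matrix.cons_val_fin_one, Matrix.mulVec, dotProduct, Matrix.of_apply, Matrix.cons_val',
      mul_one]
    exact le_of_eq (by ring)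

lemma sum_sq_mulVec_hankel_block (a b c p q r s : ℝ) (x : Fin 6 → ℝ) :
    ∑ i, (!![0, 0, 0, a, b, c;
             0, p, q, 0, 0, 0;
             0, r, s, 0, 0, 0;
             a, 0, 0, 0, 0, 0;
             b, 0, 0, 0, 0, 0;
             c, 0, 0, 0, 0, 0] *ᵥ x) i ^ 2
      = (a * x 3 + b * x 4 + c * x 5) ^ 2 + ∑ i, (!![p, q; r, s] *ᵥ ![x 1, x 2]) i ^ 2
        + (a ^ 2 + b ^ 2 + c ^ 2) * x 0 ^ 2 := by
  simp only [Matrix.mulVec, dotProduct, Matrix.of_apply, Matrix.cons_val', Matrix.cons_val_fin_one,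
    Fin.sum_univ_succ, Matrix.cons_val_zero, Matrix.cons_val_succ, Fin.succ_zero_eq_one,
    Fin.succ_one_eq_two, Fin.reduceSucc, Finset.univ_unique, Fin.default_eq_zero,
    Finset.sum_singleton, Finset.sum_const, Finset.card_singleton, one_smul]
  ring

lemma euclideanOpNorm_hankel_block (a b c p q r s : ℝ) :
    euclideanOpNorm !![0, 0, 0, a, b, c;
                       0, p, q, 0, 0, 0;
                       0, r, s, 0, 0, 0;
                       a, 0, 0, 0, 0, 0;
                       b, 0, 0, 0, 0, 0;
                       c, 0, 0, 0, 0, 0]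
      = max (Real.sqrt (a ^ 2 + b ^ 2 + c ^ 2)) (euclideanOpNorm !![p, q; r, s]) := by
  set M : Matrix (Fin 6) (Fin 6) ℝ := !![0, 0, 0, a, b, c;
                                         0, p, q, 0, 0, 0;
                                         0, r, s, 0, 0, 0;
                                         a, 0, 0, 0, 0, 0;
                                         b, 0, 0, 0, 0, 0;
                                         c, 0, 0, 0, 0, 0]
  set B : Matrix (Fin 2) (Fin 2) ℝ := !![p, q; r, s]
  set ρ := Real.sqrt (a ^ 2 + b ^ 2 + c ^ 2)
  have hρ : ρ ^ 2 = a ^ 2 + b ^ 2 + c ^ 2 := Real.sq_sqrt (by positivity)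
  have hM (x : Fin 6 → ℝ) : ∑ i, (M *ᵥ x) i ^ 2 = (a * x 3 + b * x 4 + c * x 5) ^ 2
      + ∑ i, (B *ᵥ ![x 1, x 2]) i ^ 2 + ρ ^ 2 * x 0 ^ 2 := by
    rw [hρ]
    exact sum_sq_mulVec_hankel_block a b c p q r s x
  apply le_antisymm
  · refine euclideanOpNorm_le_of_sum_sq_le _ (le_max_of_le_left (Real.sqrt_nonneg _))
      fun x => ?_
    have hrow : (a * x 3 + b * x 4 + c * x 5) ^ 2 ≤ ρ ^ 2 * (x 3 ^ 2 + x 4 ^ 2 + x 5 ^ 2) := by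
      simpa [Fin.sum_univ_three, hρ] using
        Finset.sum_mul_sq_le_sq_mul_sq Finset.univ ![a, b, c] ![x 3, x 4, x 5]
    have hB : ∑ i, (B *ᵥ ![x 1, x 2]) i ^ 2 ≤ euclideanOpNorm B ^ 2 * (x 1 ^ 2 + x 2 ^ 2) := by
      simpa [Fin.sum_univ_two] using sum_sq_mulVec_le_euclideanOpNorm_sq B ![x 1, x 2]
    have hρ_le : ρ ^ 2 ≤ max ρ (euclideanOpNorm B) ^ 2 :=
      pow_le_pow_left₀ (Real.sqrt_nonneg _) (le_max_left _ _) 2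
    have hB_le : euclideanOpNorm B ^ 2 ≤ max ρ (euclideanOpNorm B) ^ 2 :=
      pow_le_pow_left₀ (euclideanOpNorm_nonneg B) (le_max_right _ _) 2
    rw [hM, Fin.sum_univ_six]
    linarith [mul_le_mul_of_nonneg_right hρ_le
        (by positivity : 0 ≤ x 0 ^ 2 + x 3 ^ 2 + x 4 ^ 2 + x 5 ^ 2),
      mul_le_mul_of_nonneg_right hB_le (by positivity : 0 ≤ x 1 ^ 2 + x 2 ^ 2)]
  · refine max_le (le_euclideanOpNorm_of_sum_sq_le _ (Pi.single 0 1) (by simp) ?_) ?_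
    · rw [hM]
      simp [Fin.sum_univ_succ, B, Matrix.mulVec, dotProduct]
    · refine euclideanOpNorm_le_of_sum_sq_le _ (euclideanOpNorm_nonneg M) fun y => ?_
      have := sum_sq_mulVec_le_euclideanOpNorm_sq M ![0, y 0, y 1, 0, 0, 0]
      rw [hM] at this
      simpa [Fin.sum_univ_succ] using this

/-- operator norms of the Hankel-type matrices attached to
`φ_α(z) = z₁² + α z₁z₂ + z₂²`. -/
theorem hankel_matrix_norms (α : ℝ) (hα : 0 ≤ α) :
    euclideanOpNorm !![1, α; α, 1] = 1 + α ∧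
    euclideanOpNorm !![1, α, 1] = Real.sqrt (2 + α ^ 2) ∧
    euclideanOpNorm !![0, 0, 0, 1, α, 1;
                       0, 1, α, 0, 0, 0;
                       0, α, 1, 0, 0, 0;
                       1, 0, 0, 0, 0, 0;
                       α, 0, 0, 0, 0, 0;
                       1, 0, 0, 0, 0, 0]
      = max (Real.sqrt (2 + α ^ 2)) (1 + α) := by
  have hsquare : euclideanOpNorm !![1, α; α, 1] = 1 + α :=
    euclideanOpNorm_fin_two_of zero_le_one hα
  have hrow : euclideanOpNorm !![1, α, 1] = Real.sqrt (2 + α ^ 2) := by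
    rw [euclideanOpNorm_row, Fin.sum_univ_three]
    congr 1
    simp only [Matrix.cons_val]
    ring
  refine ⟨hsquare, hrow, ?_⟩
  rw [euclideanOpNorm_hankel_block, hsquare, one_pow, add_right_comm, one_add_one_eq_two]
end

section
/- Fix α ≥ 0 and define F_α : [0, ∞) → ℝ by F_α(β) = (2 + αβ)/√(2 + β²) for 0 ≤ β ≤ 1/2 and F_α(β) = (2 + αβ)/(1 + β) for β > 1/2. Then: (i) if 0 ≤ α ≤ 1/2, the supremum of F_α is attained at β = α with value √(2 + α²); (ii) if 1/2 < α ≤ 2, the supremum is attained at β = 1/2 with value (4 + α)/3; (iii) if α > 2, F_α is increasing with supremum (as β → ∞) equal to α. -/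
/-! On `β ≤ 1/2` the function is `(2 + αβ)/√(2 + β²)`, which Cauchy–Schwarz bounds by `√(2 + α²)`
with equality at `β = α`, and which increases on `[0, α]`. On `β ≥ 1/2` it is
`(2 + αβ)/(1 + β) = α + (2 - α)/(1 + β)`, monotone in the direction given by the sign of `α - 2`.
The two branches agree at `β = 1/2`, with common value `(4 + α)/3 ≤ √(2 + α²)`. -/

open Filter Set

noncomputable section

namespace Falpha

def sqrtBranch (α β : ℝ) : ℝ := (2 + α * β) / √(2 + β ^ 2)

def linBranch (α β : ℝ) : ℝ := (2 + α * β) / (1 + β)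

variable (α : ℝ)

theorem sqrtBranch_le (β : ℝ) : sqrtBranch α β ≤ √(2 + α ^ 2) := by
  have hcs : (2 + α * β) ^ 2 ≤ (2 + α ^ 2) * (2 + β ^ 2) := by nlinarith [sq_nonneg (α - β)]
  rw [sqrtBranch, div_le_iff₀ (by positivity), ← Real.sqrt_mul (by positivity)]
  exact (le_abs_self _).trans (Real.abs_le_sqrt hcs)

theorem sqrtBranch_self : sqrtBranch α α = √(2 + α ^ 2) := by
  rw [sqrtBranch, ← sq, Real.div_sqrt]

theorem sqrtBranch_half : sqrtBranch α (1 / 2) = (4 + α) / 3 := by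
  rw [sqrtBranch, show (2 : ℝ) + (1 / 2) ^ 2 = (3 / 2) ^ 2 by norm_num, Real.sqrt_sq (by norm_num)]
  ring

theorem sqrtBranch_strictMonoOn : StrictMonoOn (sqrtBranch α) (Icc 0 α) := by
  rintro x ⟨hx, hxα⟩ y ⟨hy, hyα⟩ hxy
  have hα : 0 ≤ α := hx.trans hxα
  -- `(2 + αy)²(2 + x²) - (2 + αx)²(2 + y²) = 2(y - x)((α - x)(2 + αy) + (α - y)(2 + αx))`
  have hsq : ((2 + α * x) * √(2 + y ^ 2)) ^ 2 < ((2 + α * y) * √(2 + x ^ 2)) ^ 2 := by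
    rw [mul_pow, mul_pow, Real.sq_sqrt (by positivity), Real.sq_sqrt (by positivity)]
    nlinarith [mul_pos (sub_pos.2 hxy) (mul_pos (sub_pos.2 (hxy.trans_le hyα))
      (by positivity : 0 < 2 + α * y)),
      mul_nonneg (sub_nonneg.2 hyα) (by positivity : 0 ≤ 2 + α * x)]
  rw [sqrtBranch, sqrtBranch, div_lt_div_iff₀ (by positivity) (by positivity)]
  exact lt_of_pow_lt_pow_left₀ 2 (by positivity) hsq

theorem linBranch_half : linBranch α (1 / 2) = (4 + α) / 3 := by
  rw [linBranch]
  ring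

theorem linBranch_eq {β : ℝ} (hβ : 1 + β ≠ 0) : linBranch α β = α + (2 - α) / (1 + β) := by
  rw [linBranch]
  field_simp
  ring

theorem linBranch_antitoneOn {α : ℝ} (hα : α ≤ 2) : AntitoneOn (linBranch α) (Ioi (-1)) := by
  intro x hx y hy hxy
  rw [linBranch, linBranch,
    div_le_div_iff₀ (by linarith [mem_Ioi.1 hy]) (by linarith [mem_Ioi.1 hx])]
  nlinarith [mul_nonneg (sub_nonneg.2 hα) (sub_nonneg.2 hxy)]

theorem linBranch_strictMonoOn {α : ℝ} (hα : 2 < α) : StrictMonoOn (linBranch α) (Ioi (-1)) := by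
  intro x hx y hy hxy
  rw [linBranch, linBranch,
    div_lt_div_iff₀ (by linarith [mem_Ioi.1 hx]) (by linarith [mem_Ioi.1 hy])]
  nlinarith [mul_pos (sub_pos.2 hα) (sub_pos.2 hxy)]

theorem tendsto_linBranch_atTop : Tendsto (linBranch α) atTop (nhds α) := by
  have hinv : Tendsto (fun β : ℝ => (1 + β)⁻¹) atTop (nhds 0) :=
    (tendsto_atTop_add_const_left _ 1 tendsto_id).inv_tendsto_atTop
  have hlim := (hinv.const_mul (2 - α)).const_add α
  rw [mul_zero, add_zero] at hlim
  refine hlim.congr' ?_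
  filter_upwards [eventually_gt_atTop 0] with β hβ
  rw [linBranch_eq α (by positivity), div_eq_mul_inv]

def F (α β : ℝ) : ℝ := if β ≤ 1 / 2 then sqrtBranch α β else linBranch α β

theorem F_eqOn_sqrtBranch : EqOn (F α) (sqrtBranch α) (Iic (1 / 2)) :=
  fun _ hβ => if_pos hβ

theorem F_half : F α (1 / 2) = (4 + α) / 3 := by
  rw [F_eqOn_sqrtBranch α self_mem_Iic, sqrtBranch_half]

theorem F_eqOn_linBranch : EqOn (F α) (linBranch α) (Ici (1 / 2)) := by
  intro β hβ
  rcases (mem_Ici.1 hβ).eq_or_lt with rfl | hβ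
  · rw [F_half, linBranch_half]
  · exact if_neg (not_le.2 hβ)

theorem F_self {α : ℝ} (hα : α ≤ 1 / 2) : F α α = √(2 + α ^ 2) := by
  rw [F_eqOn_sqrtBranch α (mem_Iic.2 hα), sqrtBranch_self]

theorem F_le_sqrt {α : ℝ} (hα : α ≤ 1 / 2) (β : ℝ) : F α β ≤ √(2 + α ^ 2) := by
  have hhalf : (4 + α) / 3 ≤ √(2 + α ^ 2) :=
    Real.le_sqrt_of_sq_le (by nlinarith [sq_nonneg (2 * α - 1)])
  rcases le_or_gt β (1 / 2) with hβ | hβ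
  · rw [F_eqOn_sqrtBranch α hβ]
    exact sqrtBranch_le α β
  · calc F α β = linBranch α β := F_eqOn_linBranch α (mem_Ici.2 hβ.le)
      _ ≤ linBranch α (1 / 2) :=
        linBranch_antitoneOn (by linarith) (mem_Ioi.2 (by norm_num)) (mem_Ioi.2 (by linarith)) hβ.le
      _ = (4 + α) / 3 := linBranch_half α
      _ ≤ √(2 + α ^ 2) := hhalf

theorem F_le_F_half {α : ℝ} (h₁ : 1 / 2 ≤ α) (h₂ : α ≤ 2) {β : ℝ} (hβ : 0 ≤ β) :
    F α β ≤ F α (1 / 2) := by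
  rcases le_or_gt β (1 / 2) with hβh | hβh
  · rw [F_eqOn_sqrtBranch α hβh, F_eqOn_sqrtBranch α self_mem_Iic]
    exact (sqrtBranch_strictMonoOn α).monotoneOn ⟨hβ, hβh.trans h₁⟩ ⟨by norm_num, h₁⟩ hβh
  · rw [F_eqOn_linBranch α (mem_Ici.2 hβh.le), F_eqOn_linBranch α self_mem_Ici]
    exact linBranch_antitoneOn h₂ (by norm_num) (mem_Ioi.2 (by linarith)) hβh.le

theorem F_strictMonoOn {α : ℝ} (hα : 2 < α) : StrictMonoOn (F α) (Ici 0) := by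
  have hsqrt : StrictMonoOn (F α) (Icc 0 (1 / 2)) :=
    ((sqrtBranch_strictMonoOn α).mono (Icc_subset_Icc_right (by linarith))).congr
      ((F_eqOn_sqrtBranch α).symm.mono Icc_subset_Iic_self)
  have hlin : StrictMonoOn (F α) (Ici (1 / 2)) :=
    ((linBranch_strictMonoOn hα).mono (Ici_subset_Ioi.2 (by norm_num))).congr
      (F_eqOn_linBranch α).symm
  rw [← Icc_union_Ici_eq_Ici (by norm_num : (0 : ℝ) ≤ 1 / 2)]
  exact hsqrt.union hlin (isGreatest_Icc (by norm_num)) isLeast_Ici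

theorem tendsto_F_atTop : Tendsto (F α) atTop (nhds α) :=
  (tendsto_linBranch_atTop α).congr' <| eventually_atTop.2
    ⟨1 / 2, fun _ hβ => (F_eqOn_linBranch α hβ).symm⟩

end Falpha

open Falpha in
theorem Falpha_extremal_general (α : ℝ)
    (F : ℝ → ℝ)
    (hF : ∀ β : ℝ, F β = if β ≤ 1 / 2 then (2 + α * β) / Real.sqrt (2 + β ^ 2)
      else (2 + α * β) / (1 + β)) :
    (α ≤ 1 / 2 → (∀ β ≥ (0:ℝ), F β ≤ F α) ∧ F α = Real.sqrt (2 + α ^ 2)) ∧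
    (1 / 2 < α → α ≤ 2 → (∀ β ≥ (0:ℝ), F β ≤ F (1 / 2)) ∧ F (1 / 2) = (4 + α) / 3) ∧
    (2 < α → StrictMonoOn F (Set.Ici 0) ∧ Tendsto F atTop (nhds α)) := by
  obtain rfl : F = Falpha.F α := funext hF
  refine ⟨fun hα => ⟨fun β _ => (F_self hα).symm ▸ F_le_sqrt hα β, F_self hα⟩,
    fun h₁ h₂ => ⟨fun β hβ => F_le_F_half h₁.le h₂ hβ, F_half α⟩,
    fun hα => ⟨F_strictMonoOn hα, tendsto_F_atTop α⟩⟩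

/-- extremal analysis of `F_α(β) = (2 + αβ)/max(√(2 + β²), 1 + β)`. -/
theorem Falpha_extremal (α : ℝ) (hα : 0 ≤ α)
    (F : ℝ → ℝ)
    (hF : ∀ β : ℝ, F β = if β ≤ 1 / 2 then (2 + α * β) / Real.sqrt (2 + β ^ 2)
      else (2 + α * β) / (1 + β)) :
    (α ≤ 1 / 2 → (∀ β ≥ (0:ℝ), F β ≤ F α) ∧ F α = Real.sqrt (2 + α ^ 2)) ∧
    (1 / 2 < α → α ≤ 2 → (∀ β ≥ (0:ℝ), F β ≤ F (1 / 2)) ∧ F (1 / 2) = (4 + α) / 3) ∧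
    (2 < α → StrictMonoOn F (Set.Ici 0) ∧ Tendsto F atTop (nhds α)) :=
  Falpha_extremal_general α F hF
end
end

section
/- For 1/2 ≤ α ≤ 2, the identity z₁² + α z₁z₂ + z₂² = (2/3)(α − 1/2)(z₁ + z₂)² + (2/3)(2 − α)(z₁² + (1/2) z₁z₂ + z₂²) holds as polynomials, and the quantity (2/3)(α − 1/2)·‖z₁+z₂‖²_{H²} + (2/3)(2 − α)·‖z₁² + (1/2)z₁z₂ + z₂²‖_{H²}·1 equals (4 + α)/3, where ‖z₁+z₂‖_{H²} = √2 and ‖z₁² + (1/2)z₁z₂ + z₂²‖_{H²} = 3/2. -/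
/-!
Matching the coefficients of `z₁²` and `z₁ z₂` in
`z₁² + α z₁ z₂ + z₂² = a (z₁ + z₂)² + b (z₁² + z₁ z₂ / 2 + z₂²)` gives `a + b = 1` and
`2a + b/2 = α`, i.e. `a = (2/3)(α - 1/2)` and `b = (2/3)(2 - α)`. The `H²` norm of a polynomial is
the `ℓ²` norm of its coefficients, so `‖z₁ + z₂‖² = 2` and `‖z₁² + z₁ z₂ / 2 + z₂²‖ = 3/2`, and the
cost `2a + 3b/2` of the factorization is `(4 + α)/3`.
-/

theorem weak_factorization_identity {K : Type*} [Field K] [CharZero K] (α z₁ z₂ : K) :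
    z₁ ^ 2 + α * z₁ * z₂ + z₂ ^ 2
      = (2 / 3 * (α - 1 / 2)) * (z₁ + z₂) * (z₁ + z₂)
        + (2 / 3 * (2 - α)) * (z₁ ^ 2 + z₁ * z₂ / 2 + z₂ ^ 2) := by
  field_simp
  ring

theorem sqrt_one_sq_add_half_sq_add_one_sq : Real.sqrt (1 ^ 2 + (1 / 2) ^ 2 + 1 ^ 2) = 3 / 2 := by
  rw [show (1 : ℝ) ^ 2 + (1 / 2) ^ 2 + 1 ^ 2 = (3 / 2) ^ 2 by norm_num]
  exact Real.sqrt_sq (by norm_num)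

theorem weak_factorization_middle_range_general (α : ℝ) :
    (∀ z₁ z₂ : ℂ,
      z₁ ^ 2 + (α : ℂ) * z₁ * z₂ + z₂ ^ 2
        = ((2 / 3 : ℂ) * ((α : ℂ) - 1 / 2)) * (z₁ + z₂) * (z₁ + z₂)
          + ((2 / 3 : ℂ) * (2 - (α : ℂ))) * (z₁ ^ 2 + z₁ * z₂ / 2 + z₂ ^ 2) * 1) ∧
    (2 / 3 * (α - 1 / 2)) * Real.sqrt 2 ^ 2 + (2 / 3 * (2 - α)) * (3 / 2) * 1
      = (4 + α) / 3 ∧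
    Real.sqrt (1 ^ 2 + 1 ^ 2) = Real.sqrt 2 ∧
    Real.sqrt (1 ^ 2 + (1 / 2) ^ 2 + 1 ^ 2) = 3 / 2 := by
  refine ⟨fun z₁ z₂ => ?_, ?_, by norm_num, sqrt_one_sq_add_half_sq_add_one_sq⟩
  · rw [mul_one]
    exact weak_factorization_identity (α : ℂ) z₁ z₂
  · rw [Real.sq_sqrt zero_le_two]
    ring

/-- the weak factorization identity for `φ_α` when `1/2 ≤ α ≤ 2`, and the
computation of its cost `(4 + α)/3`. -/
theorem weak_factorization_middle_range (α : ℝ) (hα₁ : 1 / 2 ≤ α) (hα₂ : α ≤ 2) :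
    (∀ z₁ z₂ : ℂ,
      z₁ ^ 2 + (α : ℂ) * z₁ * z₂ + z₂ ^ 2
        = ((2 / 3 : ℂ) * ((α : ℂ) - 1 / 2)) * (z₁ + z₂) * (z₁ + z₂)
          + ((2 / 3 : ℂ) * (2 - (α : ℂ))) * (z₁ ^ 2 + z₁ * z₂ / 2 + z₂ ^ 2) * 1) ∧
    (2 / 3 * (α - 1 / 2)) * Real.sqrt 2 ^ 2 + (2 / 3 * (2 - α)) * (3 / 2) * 1
      = (4 + α) / 3 ∧
    Real.sqrt (1 ^ 2 + 1 ^ 2) = Real.sqrt 2 ∧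
    Real.sqrt (1 ^ 2 + (1 / 2) ^ 2 + 1 ^ 2) = 3 / 2 :=
  weak_factorization_middle_range_general α
end

section
/- For every α ≥ 0, the quantity max(√(2+α²), 1+α) · N(α) = 2 + α², where N(α) = √(2+α²) for 0 ≤ α ≤ 1/2, N(α) = (4+α)/3 for 1/2 < α ≤ 2, and N(α) = α for α > 2, holds if and only if 0 ≤ α ≤ 1/2 or α = 2. -/
/-!
Compare `(1 + α)²` with `2 + α²`: they differ by `2α - 1`, so the dual norm is `√(2 + α²)` up to
`α = 1/2` and `1 + α` beyond. On `α ≤ 1/2` the product is then `‖φ_α‖²_{H²}` outright; on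
`1/2 < α ≤ 2` the equation `(1 + α)(4 + α) = 3(2 + α²)` factors as `(2α - 1)(α - 2) = 0`; and for
`α > 2` the equation `(1 + α)α = 2 + α²` forces `α = 2`.
-/

namespace Real

lemma one_add_le_sqrt_two_add_sq {a : ℝ} (ha : a ≤ 1 / 2) : 1 + a ≤ √(2 + a ^ 2) :=
  (le_abs_self _).trans (abs_le_sqrt (by nlinarith))

lemma sqrt_two_add_sq_le_one_add {a : ℝ} (ha : 1 / 2 ≤ a) : √(2 + a ^ 2) ≤ 1 + a :=
  sqrt_le_iff.2 ⟨by linarith, by nlinarith⟩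

end Real

lemma one_add_mul_four_add_div_three_eq_iff {a : ℝ} :
    (1 + a) * ((4 + a) / 3) = 2 + a ^ 2 ↔ a = 1 / 2 ∨ a = 2 := by
  have factor : (1 + a) * ((4 + a) / 3) - (2 + a ^ 2) = -(2 / 3) * ((a - 1 / 2) * (a - 2)) := by
    ring
  rw [← sub_eq_zero, factor, neg_mul, neg_eq_zero, mul_eq_zero_iff_left (by norm_num),
    mul_eq_zero, sub_eq_zero, sub_eq_zero]

lemma one_add_mul_self_eq_iff {a : ℝ} : (1 + a) * a = 2 + a ^ 2 ↔ a = 2 := by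
  constructor
  · intro h
    linarith
  · rintro rfl
    norm_num

theorem hilbert_point_weak_product_iff_general (α : ℝ)
    (N : ℝ → ℝ)
    (hN : ∀ a : ℝ, N a = if a ≤ 1 / 2 then Real.sqrt (2 + a ^ 2)
      else if a ≤ 2 then (4 + a) / 3 else a) :
    max (Real.sqrt (2 + α ^ 2)) (1 + α) * N α = 2 + α ^ 2 ↔ α ≤ 1 / 2 ∨ α = 2 := by
  rw [hN α]
  split_ifs with hsmall hmid
  · rw [max_eq_left (Real.one_add_le_sqrt_two_add_sq hsmall), Real.mul_self_sqrt (by positivity)]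
    exact iff_of_true rfl (Or.inl hsmall)
  · have hbig : 1 / 2 < α := not_le.1 hsmall
    rw [max_eq_right (Real.sqrt_two_add_sq_le_one_add hbig.le),
      one_add_mul_four_add_div_three_eq_iff, or_congr_left (iff_of_false hbig.ne' hsmall)]
  · rw [max_eq_right (Real.sqrt_two_add_sq_le_one_add (by linarith [not_le.1 hmid])),
      one_add_mul_self_eq_iff, or_iff_right hsmall]

/-- with `N(α) = ‖φ_α‖_{W(T²)}` given piecewise, the Hilbert point equation
`max(√(2+α²), 1+α)·N(α) = 2 + α²` holds iff `0 ≤ α ≤ 1/2` or `α = 2`. -/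
theorem hilbert_point_weak_product_iff (α : ℝ) (hα : 0 ≤ α)
    (N : ℝ → ℝ)
    (hN : ∀ a : ℝ, N a = if a ≤ 1 / 2 then Real.sqrt (2 + a ^ 2)
      else if a ≤ 2 then (4 + a) / 3 else a) :
    max (Real.sqrt (2 + α ^ 2)) (1 + α) * N α = 2 + α ^ 2 ↔ α ≤ 1 / 2 ∨ α = 2 :=
  hilbert_point_weak_product_iff_general α N hN
end
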